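/- arXiv:1612.00316 — 5 statements merged into one kernel-verified Lean document; each statement's English description precedes it below -/
import Mathlib

section
/- Let A, B be real matrices with (A,B) stabilizable, and let P be a symmetric positive semidefinite matrix satisfying A^T P + P A − P B B^T P = −Q with Q ⪰ 0, such that A − B B^T P is Hurwitz (all eigenvalues have negative real part). Then for every real σ ≥ 1, the matrix A − σ B B^T P is Hurwitz. -/
open Matrix

/-- A real square matrix is Hurwitz if all its complex eigenvalues have
negative real part. -/
def IsHurwitz {n : ℕ} (M : Matrix (Fin n) (Fin n) ℝ) : Prop :=
  ∀ μ ∈ spectrum ℂ (M.map (Complex.ofReal)), μ.re < 0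

/-- (A, B) is stabilizable if some state feedback makes the closed loop Hurwitz. -/
def IsStabilizable {n m : ℕ} (A : Matrix (Fin n) (Fin n) ℝ)
    (B : Matrix (Fin n) (Fin m) ℝ) : Prop :=
  ∃ K : Matrix (Fin m) (Fin n) ℝ, IsHurwitz (A + B * K)

/-!
Let `N = A - σ B Bᵀ P` and `N x = μ x` with `x ≠ 0` and `Re μ ≥ 0`. The Riccati equation turns
into the Lyapunov identity `Nᴴ P + P N = -Q - (2σ - 1) (BᵀP)ᴴ (BᵀP)`, whose quadratic form at `x`
reads `2 Re μ · x*Px = -x*Qx - (2σ - 1) ‖BᵀP x‖²`. The left side is nonnegative and the right side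
nonpositive, so `BᵀP x = 0` as soon as `σ > 1/2`. Then `x` is also an eigenvector of `A - B Bᵀ P`
for `μ`, which contradicts its being Hurwitz.
-/

open scoped ComplexOrder

namespace Matrix

variable {n m : Type*} [Fintype n] [Fintype m]

theorem mem_spectrum_iff_exists_mulVec_eq_smul {K : Type*} [Field K] [DecidableEq n]
    {M : Matrix n n K} {μ : K} : μ ∈ spectrum K M ↔ ∃ v ≠ 0, M *ᵥ v = μ • v := by
  rw [← spectrum_toLin', ← Module.End.hasEigenvalue_iff_mem_spectrum]
  constructor
  · intro h
    obtain ⟨v, hv⟩ := h.exists_hasEigenvector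
    exact ⟨v, hv.2, by simpa using hv.apply_eq_smul⟩
  · rintro ⟨v, hv0, hv⟩
    exact Module.End.hasEigenvalue_of_hasEigenvector
      ⟨by simpa [Module.End.mem_eigenspace_iff] using hv, hv0⟩

section RCLike

variable {𝕜 : Type*} [RCLike 𝕜]

theorem dotProduct_conjTranspose_mul_add_mul_mulVec_of_mulVec_eq_smul {N P : Matrix n n 𝕜}
    {μ : 𝕜} {x : n → 𝕜} (hx : N *ᵥ x = μ • x) :
    star x ⬝ᵥ ((Nᴴ * P + P * N) *ᵥ x) = ((2 * RCLike.re μ : ℝ) : 𝕜) * (star x ⬝ᵥ (P *ᵥ x)) := by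
  rw [add_mulVec, dotProduct_add, ← mulVec_mulVec, ← mulVec_mulVec, dotProduct_mulVec,
    ← star_mulVec, hx, star_smul, smul_dotProduct, mulVec_smul, dotProduct_smul, smul_eq_mul,
    smul_eq_mul, ← add_mul, RCLike.star_def, add_comm, RCLike.add_conj]
  push_cast
  ring

theorem mulVec_eq_zero_of_conjTranspose_mul_add_mul_eq {N P Q : Matrix n n 𝕜}
    {K : Matrix m n 𝕜} {c : ℝ} (hP : P.PosSemidef) (hQ : Q.PosSemidef) (hc : 0 < c)
    (hN : Nᴴ * P + P * N = -Q - c • (Kᴴ * K)) {μ : 𝕜} (hμ : 0 ≤ RCLike.re μ) {x : n → 𝕜}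
    (hx : N *ᵥ x = μ • x) : K *ᵥ x = 0 := by
  have h := dotProduct_conjTranspose_mul_add_mul_mulVec_of_mulVec_eq_smul (P := P) hx
  set y := K *ᵥ x
  have hKK : star x ⬝ᵥ ((Kᴴ * K) *ᵥ x) = star y ⬝ᵥ y := by
    rw [← mulVec_mulVec, dotProduct_mulVec, ← star_mulVec]
  rw [hN, sub_mulVec, neg_mulVec, smul_mulVec, dotProduct_sub, dotProduct_neg, dotProduct_smul,
    hKK] at h
  obtain ⟨hy_re_nonneg, hy_im⟩ := RCLike.nonneg_iff.mp (dotProduct_star_self_nonneg y)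
  have hy_re : RCLike.re (star y ⬝ᵥ y) ≤ 0 := by
    have := congrArg RCLike.re h
    simp only [map_sub, map_neg, RCLike.real_smul_eq_coe_mul, RCLike.re_ofReal_mul] at this
    nlinarith [hP.re_dotProduct_nonneg x, hQ.re_dotProduct_nonneg x]
  exact dotProduct_star_self_eq_zero.mp
    (RCLike.ext (by simpa using le_antisymm hy_re hy_re_nonneg) (by simpa using hy_im))

theorem conjTranspose_sub_smul_mul_add_mul_eq_of_riccati {A P Q : Matrix n n 𝕜}
    {B : Matrix n m 𝕜} (hP : Pᴴ = P) (hARE : Aᴴ * P + P * A - P * B * Bᴴ * P = -Q) (σ : ℝ) :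
    (A - σ • (B * Bᴴ * P))ᴴ * P + P * (A - σ • (B * Bᴴ * P)) =
      -Q - (2 * σ - 1) • ((Bᴴ * P)ᴴ * (Bᴴ * P)) := by
  rw [← hARE]
  simp only [conjTranspose_sub, conjTranspose_smul, conjTranspose_mul, conjTranspose_conjTranspose,
    hP, star_trivial, Matrix.sub_mul, Matrix.mul_sub, Matrix.smul_mul, Matrix.mul_smul,
    Matrix.mul_assoc]
  module

theorem mem_spectrum_sub_mul_of_mem_spectrum_sub_smul_mul [DecidableEq n] {A P Q : Matrix n n 𝕜}
    {B : Matrix n m 𝕜} (hP : P.PosSemidef) (hQ : Q.PosSemidef)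
    (hARE : Aᴴ * P + P * A - P * B * Bᴴ * P = -Q) {σ : ℝ} (hσ : 1 / 2 < σ) {μ : 𝕜}
    (hμ : μ ∈ spectrum 𝕜 (A - σ • (B * Bᴴ * P))) (hre : 0 ≤ RCLike.re μ) :
    μ ∈ spectrum 𝕜 (A - B * Bᴴ * P) := by
  obtain ⟨x, hx0, hx⟩ := mem_spectrum_iff_exists_mulVec_eq_smul.mp hμ
  have hKx : (Bᴴ * P) *ᵥ x = 0 :=
    mulVec_eq_zero_of_conjTranspose_mul_add_mul_eq hP hQ (by linarith)
      (conjTranspose_sub_smul_mul_add_mul_eq_of_riccati hP.1 hARE σ) hre hx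
  have hgain : ∀ τ : ℝ, (A - τ • (B * Bᴴ * P)) *ᵥ x = A *ᵥ x := fun τ ↦ by
    rw [sub_mulVec, smul_mulVec, Matrix.mul_assoc, ← mulVec_mulVec, hKx, mulVec_zero, smul_zero,
      sub_zero]
  refine mem_spectrum_iff_exists_mulVec_eq_smul.mpr ⟨x, hx0, ?_⟩
  rw [← one_smul ℝ (B * Bᴴ * P), hgain, ← hgain σ, hx]

end RCLike

omit [Fintype m] in
@[simp]
theorem map_ofReal_mul {l : Type*} (L : Matrix l n ℝ) (M : Matrix n m ℝ) :
    (L * M).map Complex.ofReal = L.map Complex.ofReal * M.map Complex.ofReal :=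
  Matrix.map_mul (f := Complex.ofRealHom)

omit [Fintype n] [Fintype m] in
@[simp]
theorem transpose_map_ofReal (M : Matrix m n ℝ) :
    Mᵀ.map Complex.ofReal = (M.map Complex.ofReal)ᴴ := by
  ext; simp

theorem PosSemidef.map_ofReal {P : Matrix n n ℝ} (hP : P.PosSemidef) :
    (P.map Complex.ofReal).PosSemidef := by
  classical
  obtain ⟨C, rfl⟩ : ∃ C : Matrix n n ℝ, P = star C * C := by
    open scoped MatrixOrder Matrix.Norms.L2Operator in
    exact CStarAlgebra.nonneg_iff_eq_star_mul_self.mp hP.nonneg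
  simpa [star_eq_conjTranspose] using posSemidef_conjTranspose_mul_self (C.map Complex.ofReal)

end Matrix

theorem scaled_riccati_gain_hurwitz_general
    {n m : ℕ} (A : Matrix (Fin n) (Fin n) ℝ) (B : Matrix (Fin n) (Fin m) ℝ)
    (P Q : Matrix (Fin n) (Fin n) ℝ)
    (hP : P.PosSemidef) (hQ : Q.PosSemidef)
    (hARE : Aᵀ * P + P * A - P * B * Bᵀ * P = -Q)
    (hHur : IsHurwitz (A - B * Bᵀ * P)) :
    ∀ σ : ℝ, 1 ≤ σ → IsHurwitz (A - σ • (B * Bᵀ * P)) := by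
  intro σ hσ μ hμ
  by_contra! hre
  have hAREc := congrArg (Matrix.map · Complex.ofReal) hARE
  simp only [Matrix.map_sub, Matrix.map_add, Matrix.map_neg, map_ofReal_mul, transpose_map_ofReal,
    Complex.ofReal_sub, Complex.ofReal_add, Complex.ofReal_neg, implies_true] at hAREc
  refine (hHur μ ?_).not_ge hre
  simpa [Matrix.map_sub] using
    mem_spectrum_sub_mul_of_mem_spectrum_sub_smul_mul (σ := σ) hP.map_ofReal hQ.map_ofReal hAREc
      (by linarith) (by simpa [Matrix.map_sub, Matrix.map_smul] using hμ) (by simpa using hre)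

theorem scaled_riccati_gain_hurwitz
    {n m : ℕ} (A : Matrix (Fin n) (Fin n) ℝ) (B : Matrix (Fin n) (Fin m) ℝ)
    (P Q : Matrix (Fin n) (Fin n) ℝ)
    (hstab : IsStabilizable A B)
    (hP : P.PosSemidef) (hQ : Q.PosSemidef)
    (hARE : Aᵀ * P + P * A - P * B * Bᵀ * P = -Q)
    (hHur : IsHurwitz (A - B * Bᵀ * P)) :
    ∀ σ : ℝ, 1 ≤ σ → IsHurwitz (A - σ • (B * Bᵀ * P)) :=
  scaled_riccati_gain_hurwitz_general A B P Q hP hQ hARE hHur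
end

section
/- Under the assumptions of the previous context, if (λ, v) is an eigenpair of A_cl := A − σ B B^T P with σ ≥ 1 and v^H P v = 0, then P v = 0 and (λ, v) is also an eigenpair of A_p = A − B B^T P; in particular Re(λ) < 0. -/
/-!
Writing the positive semidefinite `P` as `Cᵀ C`, the condition `vᴴ P v = 0` says `‖C v‖² = 0`,
so `P v = 0`. Every feedback term `c • (B Bᵀ P)` then annihilates `v`, hence `v` is an eigenvector
for the eigenvalue `λ` of `A`, and so of `A - B Bᵀ P`, which is Hurwitz.
-/

open Matrix

open scoped ComplexOrder MatrixOrder Matrix.Norms.L2Operator in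
theorem Matrix.PosSemidef.map_ofReal_s2 {𝕜 n : Type*} [RCLike 𝕜] [Finite n] {P : Matrix n n ℝ}
    (hP : P.PosSemidef) : (P.map (RCLike.ofReal : ℝ → 𝕜)).PosSemidef := by
  classical
  have := Fintype.ofFinite n
  obtain ⟨C, rfl⟩ := CStarAlgebra.nonneg_iff_eq_star_mul_self.mp hP.nonneg
  have hC : (star C * C).map (RCLike.ofReal : ℝ → 𝕜) =
      (C.map RCLike.ofReal)ᴴ * C.map RCLike.ofReal := by
    ext i j
    simp [mul_apply, conjTranspose_apply]
  simpa [hC] using posSemidef_conjTranspose_mul_self (C.map (RCLike.ofReal : ℝ → 𝕜))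

theorem Matrix.PosSemidef.map_ofReal_mulVec_eq_zero {𝕜 n : Type*} [RCLike 𝕜] [Fintype n]
    {P : Matrix n n ℝ} (hP : P.PosSemidef) {v : n → 𝕜}
    (h : star v ⬝ᵥ (P.map RCLike.ofReal *ᵥ v) = 0) : P.map RCLike.ofReal *ᵥ v = 0 :=
  (hP.map_ofReal_s2.dotProduct_mulVec_zero_iff v).mp h

theorem Matrix.map_ofReal_sub_smul_mul_mulVec_of_mulVec_eq_zero {n m : Type*} [Fintype n]
    [Fintype m] (A : Matrix n n ℝ) (K : Matrix n m ℝ) {P : Matrix m n ℝ} (c : ℝ) {v : n → ℂ}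
    (hPv : P.map Complex.ofReal *ᵥ v = 0) :
    (A - c • (K * P)).map Complex.ofReal *ᵥ v = A.map Complex.ofReal *ᵥ v := by
  have hmap : (A - c • (K * P)).map Complex.ofReal =
      A.map Complex.ofReal - (c : ℂ) • (K.map Complex.ofReal * P.map Complex.ofReal) := by
    ext i j
    simp [mul_apply, Finset.mul_sum]
  rw [hmap, sub_mulVec, smul_mulVec, ← mulVec_mulVec, hPv, mulVec_zero, smul_zero, sub_zero]

theorem Matrix.mem_spectrum_of_mulVec_eq_smul {R n : Type*} [Field R] [Fintype n]
    [DecidableEq n] {M : Matrix n n R} {μ : R} {v : n → R} (hv : v ≠ 0)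
    (h : M *ᵥ v = μ • v) : μ ∈ spectrum R M := by
  rw [← spectrum_toLin']
  exact Module.End.HasEigenvalue.mem_spectrum <| Module.End.hasEigenvalue_of_hasEigenvector
    ⟨Module.End.mem_eigenspace_iff.mpr (by simpa using h), hv⟩

theorem IsHurwitz.re_lt_zero_of_mulVec_eq_smul {n : ℕ} {M : Matrix (Fin n) (Fin n) ℝ}
    (hM : IsHurwitz M) {μ : ℂ} {v : Fin n → ℂ} (hv : v ≠ 0)
    (h : M.map Complex.ofReal *ᵥ v = μ • v) : μ.re < 0 :=
  hM μ (mem_spectrum_of_mulVec_eq_smul hv h)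

theorem eigenpair_with_Pv_zero_general
    {n m : ℕ} (A : Matrix (Fin n) (Fin n) ℝ) (B : Matrix (Fin n) (Fin m) ℝ)
    (P : Matrix (Fin n) (Fin n) ℝ)
    (hP : P.PosSemidef)
    (σ : ℝ)
    (hHur : IsHurwitz (A - B * Bᵀ * P))
    (lam : ℂ) (v : Fin n → ℂ) (hv : v ≠ 0)
    (heig : ((A - σ • (B * Bᵀ * P)).map Complex.ofReal) *ᵥ v = lam • v)
    (hPv : star v ⬝ᵥ ((P.map Complex.ofReal) *ᵥ v) = 0) :
    (P.map Complex.ofReal) *ᵥ v = 0 ∧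
      ((A - B * Bᵀ * P).map Complex.ofReal) *ᵥ v = lam • v ∧
      lam.re < 0 := by
  have hPv0 : P.map Complex.ofReal *ᵥ v = 0 := hP.map_ofReal_mulVec_eq_zero hPv
  have hA : A.map Complex.ofReal *ᵥ v = lam • v := by
    rwa [map_ofReal_sub_smul_mul_mulVec_of_mulVec_eq_zero A (B * Bᵀ) σ hPv0] at heig
  have hAp : (A - B * Bᵀ * P).map Complex.ofReal *ᵥ v = lam • v := by
    simpa only [one_smul] using
      (map_ofReal_sub_smul_mul_mulVec_of_mulVec_eq_zero A (B * Bᵀ) 1 hPv0).trans hA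
  exact ⟨hPv0, hAp, hHur.re_lt_zero_of_mulVec_eq_smul hv hAp⟩

theorem eigenpair_with_Pv_zero
    {n m : ℕ} (A : Matrix (Fin n) (Fin n) ℝ) (B : Matrix (Fin n) (Fin m) ℝ)
    (P Q : Matrix (Fin n) (Fin n) ℝ)
    (hP : P.PosSemidef) (hQ : Q.PosSemidef)
    (hARE : Aᵀ * P + P * A - P * B * Bᵀ * P = -Q)
    (σ : ℝ) (hσ : 1 ≤ σ)
    (hHur : IsHurwitz (A - B * Bᵀ * P))
    (lam : ℂ) (v : Fin n → ℂ) (hv : v ≠ 0)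
    (heig : ((A - σ • (B * Bᵀ * P)).map Complex.ofReal) *ᵥ v = lam • v)
    (hPv : star v ⬝ᵥ ((P.map Complex.ofReal) *ᵥ v) = 0) :
    (P.map Complex.ofReal) *ᵥ v = 0 ∧
      ((A - B * Bᵀ * P).map Complex.ofReal) *ᵥ v = lam • v ∧
      lam.re < 0 :=
  eigenpair_with_Pv_zero_general A B P hP σ hHur lam v hv heig hPv
end

section
/- Let P solve A^T P + P A − P B B^T P = −Q with Q ⪰ 0, let σ ≥ 1, and set A_cl = A − σ B B^T P. Then A_cl^T · (σ²/(2σ−1)) P + (σ²/(2σ−1)) P · A_cl + σ² P B B^T P = −(σ²/(2σ−1)) Q. In particular, if H satisfies the Lyapunov equation A_cl^T H + H A_cl = −σ² P B B^T P and A_cl is Hurwitz, then H ⪯ (σ²/(2σ−1)) P. -/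
open Matrix

/-!
The first claim is the Lyapunov identity of `P` along the closed loop,
`A_clᵀ P + P A_cl = -Q - (2σ - 1) P B Bᵀ P`, multiplied by `c = σ² / (2σ - 1)`. Subtracting
the equation for `H` shows that `X = c P - H` solves `A_clᵀ X + X A_cl = -c Q`, so it remains
to see that Lyapunov equations of Hurwitz matrices have positive semidefinite solutions.
For this we pass to discrete time: the Cayley transform `C = (1 + M)(1 - M)⁻¹` of a Hurwitz `M`
has its spectrum in the open unit disc, hence `Cᴺ → 0` by Gelfand's formula, and the Lyapunov
equation turns into the Stein equation `X = Cᵀ X C + S` with `S ⪰ 0`. Along every orbit `Cᴺ x`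
the quadratic form of `X` then decreases to `0`, so it is nonnegative.
-/

open Filter Topology

theorem tendsto_pow_atTop_nhds_zero_of_spectralRadius_lt_one {A : Type*} [NormedRing A]
    [NormedAlgebra ℂ A] [CompleteSpace A] {a : A} (h : spectralRadius ℂ a < 1) :
    Tendsto (a ^ ·) atTop (𝓝 0) := by
  obtain ⟨r, hρr, hr1⟩ := ENNReal.lt_iff_exists_nnreal_btwn.mp h
  have hbound : ∀ᶠ N : ℕ in atTop, ‖a ^ N‖₊ ≤ r ^ N := by
    filter_upwards [(spectrum.pow_nnnorm_pow_one_div_tendsto_nhds_spectralRadius a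
      ).eventually_lt_const hρr, eventually_ne_atTop 0] with N hN hN0
    have := ENNReal.rpow_lt_rpow hN (Nat.cast_pos.mpr (Nat.pos_of_ne_zero hN0))
    rw [← ENNReal.rpow_mul, one_div_mul_cancel (Nat.cast_ne_zero.mpr hN0), ENNReal.rpow_one,
      ENNReal.rpow_natCast, ← ENNReal.coe_pow, ENNReal.coe_lt_coe] at this
    exact this.le
  refine squeeze_zero_norm' (hbound.mono fun N hN => NNReal.coe_le_coe.mpr hN) ?_
  push_cast
  exact tendsto_pow_atTop_nhds_zero_of_lt_one r.coe_nonneg (by exact_mod_cast hr1)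

theorem mem_spectrum_of_mem_spectrum_cayley {𝕜 A : Type*} [Field 𝕜] [NeZero (2 : 𝕜)] [Ring A]
    [Algebra 𝕜 A]
    {a : A} (u : Aˣ) (hu : (u : A) = 1 - a) {μ : 𝕜} (hμ : μ ∈ spectrum 𝕜 ((1 + a) * ↑u⁻¹)) :
    μ + 1 ≠ 0 ∧ (μ - 1) / (μ + 1) ∈ spectrum 𝕜 a := by
  have hfactor : algebraMap 𝕜 A μ - (1 + a) * ↑u⁻¹ = ((μ - 1) • 1 - (μ + 1) • a) * ↑u⁻¹ := by
    calc algebraMap 𝕜 A μ - (1 + a) * ↑u⁻¹ = (μ • (u : A) - (1 + a)) * ↑u⁻¹ := by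
          rw [sub_mul, smul_mul_assoc, Units.mul_inv, Algebra.algebraMap_eq_smul_one]
      _ = _ := by rw [hu]; congr 1; module
  rw [spectrum.mem_iff, hfactor, Units.isUnit_mul_units] at hμ
  have hμ1 : μ + 1 ≠ 0 := by
    intro h
    rw [h, zero_smul, sub_zero, ← Algebra.algebraMap_eq_smul_one] at hμ
    refine hμ ((isUnit_iff_ne_zero.mpr ?_).map _)
    rw [show μ - 1 = -2 by linear_combination h]
    exact neg_ne_zero.mpr two_ne_zero
  refine ⟨hμ1, ?_⟩
  rw [spectrum.mem_iff]
  contrapose! hμ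
  have : (μ - 1) • (1 : A) - (μ + 1) • a =
      algebraMap 𝕜 A (μ + 1) * (algebraMap 𝕜 A ((μ - 1) / (μ + 1)) - a) := by
    rw [mul_sub, ← map_mul, mul_div_cancel₀ _ hμ1, ← Algebra.smul_def,
      Algebra.algebraMap_eq_smul_one]
  rw [this]
  exact ((isUnit_iff_ne_zero.mpr hμ1).map _).mul hμ

theorem Complex.norm_lt_one_of_re_cayley_neg {μ : ℂ} (h : ((μ - 1) / (μ + 1)).re < 0) :
    ‖μ‖ < 1 := by
  have hre : ((μ - 1) / (μ + 1)).re = (Complex.normSq μ - 1) / Complex.normSq (μ + 1) := by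
    rw [Complex.div_re, ← add_div, Complex.normSq_apply, Complex.normSq_apply μ]
    simp only [Complex.sub_re, Complex.add_re, Complex.sub_im, Complex.add_im, Complex.one_re,
      Complex.one_im]
    ring
  rw [hre, div_neg_iff] at h
  have : Complex.normSq μ < 1 := by
    rcases h with ⟨-, h⟩ | ⟨h, -⟩
    · exact absurd h (Complex.normSq_nonneg _).not_gt
    · linarith
  rw [Complex.normSq_eq_norm_sq] at this
  nlinarith [norm_nonneg μ]

namespace Matrix

variable {ι : Type*} [Fintype ι] [DecidableEq ι]

theorem isUnit_map_iff {K L : Type*} [Field K] [Field L] (f : K →+* L) (M : Matrix ι ι K) :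
    IsUnit (M.map f) ↔ IsUnit M := by
  rw [isUnit_iff_isUnit_det, isUnit_iff_isUnit_det, ← RingHom.mapMatrix_apply, ← RingHom.map_det,
    isUnit_iff_ne_zero, isUnit_iff_ne_zero, map_ne_zero]

theorem tendsto_pow_atTop_nhds_zero_of_norm_spectrum_lt_one {C : Matrix ι ι ℝ}
    (hC : ∀ z ∈ spectrum ℂ (C.map Complex.ofReal), ‖z‖ < 1) :
    Tendsto (C ^ ·) atTop (𝓝 0) := by
  -- The topology of this norm is the entrywise one, which makes the final `convert` work.
  let _ := Matrix.linftyOpNormedRing (n := ι) (α := ℂ)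
  let _ := Matrix.linftyOpNormedAlgebra (n := ι) (R := ℂ) (α := ℂ)
  have hρ : spectralRadius ℂ (C.map Complex.ofReal) < 1 := by
    rcases (spectrum ℂ (C.map Complex.ofReal)).eq_empty_or_nonempty with hempty | hne
    · simp [spectralRadius, hempty]
    · exact_mod_cast spectrum.spectralRadius_lt_of_forall_lt_of_nonempty hne (r := 1)
        fun z hz => by exact_mod_cast hC z hz
  have hre : Continuous fun N : Matrix ι ι ℂ => N.map Complex.re :=
    continuous_id.matrix_map Complex.continuous_re
  have := (hre.tendsto 0).comp (tendsto_pow_atTop_nhds_zero_of_spectralRadius_lt_one hρ)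
  convert this using 2 with N
  · change C ^ N = ((C.map Complex.ofRealHom) ^ N).map Complex.re
    rw [← Matrix.map_pow, Matrix.map_map]
    ext
    simp
  · simp

theorem posSemidef_of_stein {C X S : Matrix ι ι ℝ} (hX : X.IsSymm) (hS : S.PosSemidef)
    (hstein : Cᵀ * X * C + S = X) (hC : Tendsto (C ^ ·) atTop (𝓝 0)) : X.PosSemidef := by
  refine posSemidef_iff_dotProduct_mulVec.mpr
    ⟨(conjTranspose_eq_transpose_of_trivial X).trans hX, fun x => ?_⟩
  have hstep (v : ι → ℝ) : (C *ᵥ v) ⬝ᵥ X *ᵥ (C *ᵥ v) ≤ v ⬝ᵥ X *ᵥ v := by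
    have hSv := hS.dotProduct_mulVec_nonneg v
    rw [star_trivial] at hSv
    calc (C *ᵥ v) ⬝ᵥ X *ᵥ (C *ᵥ v) = v ⬝ᵥ (Cᵀ * X * C) *ᵥ v := by
          rw [← mulVec_mulVec, ← mulVec_mulVec, dotProduct_mulVec v Cᵀ, vecMul_transpose]
      _ ≤ v ⬝ᵥ (Cᵀ * X * C) *ᵥ v + v ⬝ᵥ S *ᵥ v := le_add_of_nonneg_right hSv
      _ = v ⬝ᵥ X *ᵥ v := by rw [← dotProduct_add, ← add_mulVec, hstein]
  have hanti : Antitone fun N : ℕ => (C ^ N *ᵥ x) ⬝ᵥ X *ᵥ (C ^ N *ᵥ x) :=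
    antitone_nat_of_succ_le fun N => by
      rw [pow_succ', ← mulVec_mulVec]
      exact hstep _
  have hcont : Continuous fun N : Matrix ι ι ℝ => (N *ᵥ x) ⬝ᵥ X *ᵥ (N *ᵥ x) := by
    fun_prop
  have hlim := (hcont.tendsto 0).comp hC
  simp only [zero_mulVec, zero_dotProduct] at hlim
  simpa [star_trivial] using hanti.le_of_tendsto hlim 0

theorem cayley_stein {R : Type*} [CommRing R] {M W X Y : Matrix ι ι R} (hW : (1 - M) * W = 1)
    (hlyap : Mᵀ * X + X * M = -Y) :
    ((1 + M) * W)ᵀ * X * ((1 + M) * W) + Wᵀ * (2 • Y) * W = X := by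
  have hWt : Wᵀ * (1 - M)ᵀ = 1 := by rw [← transpose_mul, hW, transpose_one]
  calc ((1 + M) * W)ᵀ * X * ((1 + M) * W) + Wᵀ * (2 • Y) * W
      = Wᵀ * ((1 + M)ᵀ * X * (1 + M) - 2 • (Mᵀ * X + X * M)) * W := by
        rw [hlyap, transpose_mul]; noncomm_ring
    _ = (Wᵀ * (1 - M)ᵀ) * X * ((1 - M) * W) := by
        rw [transpose_add, transpose_sub, transpose_one]; noncomm_ring
    _ = X := by rw [hWt, hW, one_mul, mul_one]

end Matrix

namespace IsHurwitz

variable {n : ℕ} {M : Matrix (Fin n) (Fin n) ℝ}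

theorem isUnit_one_sub (hM : IsHurwitz M) : IsUnit (1 - M) := by
  have h1 : (1 : ℂ) ∉ spectrum ℂ (M.map Complex.ofReal) := fun h => absurd (hM 1 h) (by norm_num)
  rw [spectrum.notMem_iff, map_one] at h1
  rw [← Matrix.isUnit_map_iff Complex.ofRealHom]
  change IsUnit (Complex.ofRealHom.mapMatrix (1 - M))
  rwa [map_sub, map_one]

theorem norm_lt_one_of_mem_spectrum_cayley (hM : IsHurwitz M) (u : (Matrix (Fin n) (Fin n) ℝ)ˣ)
    (hu : (u : Matrix (Fin n) (Fin n) ℝ) = 1 - M) :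
    ∀ z ∈ spectrum ℂ (((1 + M) * (↑u⁻¹ : Matrix (Fin n) (Fin n) ℝ)).map Complex.ofReal),
      ‖z‖ < 1 := by
  intro z hz
  let uc := Units.map (Complex.ofRealHom.mapMatrix : Matrix (Fin n) (Fin n) ℝ →+* _).toMonoidHom u
  have huc : (uc : Matrix (Fin n) (Fin n) ℂ) = 1 - M.map Complex.ofReal := by
    change Complex.ofRealHom.mapMatrix (u : Matrix (Fin n) (Fin n) ℝ) = _
    rw [hu, map_sub, map_one]
    rfl
  have hC : ((1 + M) * (↑u⁻¹ : Matrix (Fin n) (Fin n) ℝ)).map Complex.ofReal =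
      (1 + M.map Complex.ofReal) * (↑uc⁻¹ : Matrix (Fin n) (Fin n) ℂ) := by
    change Complex.ofRealHom.mapMatrix ((1 + M) * (↑u⁻¹ : Matrix (Fin n) (Fin n) ℝ)) = _
    rw [map_mul, map_add, map_one]
    rfl
  rw [hC] at hz
  exact Complex.norm_lt_one_of_re_cayley_neg
    (hM _ (mem_spectrum_of_mem_spectrum_cayley uc huc hz).2)

theorem posSemidef_of_lyapunov (hM : IsHurwitz M) {X R : Matrix (Fin n) (Fin n) ℝ}
    (hX : X.IsSymm) (hR : R.PosSemidef) (hlyap : Mᵀ * X + X * M = -R) : X.PosSemidef := by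
  obtain ⟨u, hu⟩ := hM.isUnit_one_sub
  set W : Matrix (Fin n) (Fin n) ℝ := ↑u⁻¹
  have hS : (Wᵀ * (2 • R) * W).PosSemidef := by
    rw [← conjTranspose_eq_transpose_of_trivial, two_nsmul]
    exact (hR.add hR).conjTranspose_mul_mul_same _
  exact posSemidef_of_stein hX hS (cayley_stein (hu ▸ u.mul_inv) hlyap)
    (tendsto_pow_atTop_nhds_zero_of_norm_spectrum_lt_one
      (hM.norm_lt_one_of_mem_spectrum_cayley u hu))

end IsHurwitz

theorem closedLoop_lyapunov {ι κ R : Type*} [Fintype ι] [Fintype κ] [CommRing R]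
    {A P Q : Matrix ι ι R} {B : Matrix ι κ R} (hP : Pᵀ = P)
    (hARE : Aᵀ * P + P * A - P * B * Bᵀ * P = -Q) (σ : R) :
    (A - σ • (B * Bᵀ * P))ᵀ * P + P * (A - σ • (B * Bᵀ * P)) =
      -Q - (2 * σ - 1) • (P * B * Bᵀ * P) := by
  have hT : (A - σ • (B * Bᵀ * P))ᵀ = Aᵀ - σ • (P * B * Bᵀ) := by
    rw [transpose_sub, transpose_smul, transpose_mul, transpose_mul, transpose_transpose, hP,
      Matrix.mul_assoc]
  rw [hT, ← hARE]
  simp only [Matrix.sub_mul, Matrix.mul_sub, smul_mul_assoc, mul_smul_comm, Matrix.mul_assoc]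
  module

theorem energy_upper_bound
    {n m : ℕ} (A : Matrix (Fin n) (Fin n) ℝ) (B : Matrix (Fin n) (Fin m) ℝ)
    (P Q H : Matrix (Fin n) (Fin n) ℝ)
    (hP : P.PosSemidef) (hQ : Q.PosSemidef)
    (hARE : Aᵀ * P + P * A - P * B * Bᵀ * P = -Q)
    (σ : ℝ) (hσ : 1 ≤ σ)
    (hHur : IsHurwitz (A - σ • (B * Bᵀ * P)))
    (hH : H.IsSymm) :
    (A - σ • (B * Bᵀ * P))ᵀ * ((σ ^ 2 / (2 * σ - 1)) • P) +
        ((σ ^ 2 / (2 * σ - 1)) • P) * (A - σ • (B * Bᵀ * P)) +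
          σ ^ 2 • (P * B * Bᵀ * P) = -((σ ^ 2 / (2 * σ - 1)) • Q) ∧
    ((A - σ • (B * Bᵀ * P))ᵀ * H + H * (A - σ • (B * Bᵀ * P)) =
        -(σ ^ 2 • (P * B * Bᵀ * P)) →
      ((σ ^ 2 / (2 * σ - 1)) • P - H).PosSemidef) := by
  set Acl := A - σ • (B * Bᵀ * P)
  set c := σ ^ 2 / (2 * σ - 1)
  have hden : 0 < 2 * σ - 1 := by linarith
  have hc : 0 ≤ c := div_nonneg (sq_nonneg σ) hden.le
  have hPt : Pᵀ = P := (conjTranspose_eq_transpose_of_trivial P).symm.trans hP.1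
  have hscaled : Aclᵀ * (c • P) + (c • P) * Acl + σ ^ 2 • (P * B * Bᵀ * P) = -(c • Q) := by
    rw [mul_smul_comm, smul_mul_assoc, ← smul_add, closedLoop_lyapunov hPt hARE, smul_sub,
      smul_smul, div_mul_cancel₀ _ hden.ne', smul_neg]
    abel
  refine ⟨hscaled, fun hHlyap => hHur.posSemidef_of_lyapunov ?_ (hQ.smul hc) ?_⟩
  · rw [IsSymm, transpose_sub, transpose_smul, hPt, hH]
  · calc Aclᵀ * (c • P - H) + (c • P - H) * Acl
        = (Aclᵀ * (c • P) + (c • P) * Acl + σ ^ 2 • (P * B * Bᵀ * P))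
          - (Aclᵀ * H + H * Acl + σ ^ 2 • (P * B * Bᵀ * P)) := by
          rw [Matrix.mul_sub, Matrix.sub_mul]; abel
      _ = -(c • Q) := by rw [hscaled, hHlyap]; abel
end

section
/- Let P₀ ⪰ 0 solve A^T P₀ + P₀ A − P₀ B B^T P₀ = 0 and let P ⪰ 0 solve A^T P + P A − P B B^T P = −Q with Q ⪰ 0. For σ ≥ 1 set A_cl = A − σ B B^T P and suppose A_cl is Hurwitz. If H is the symmetric solution of A_cl^T H + H A_cl = −σ² P B B^T P, then H ⪰ P₀. -/
/-!
By the Riccati equation for `P₀`, `X = H - P₀` solves the Lyapunov equation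
`A_clᵀ X + X A_cl = -(σP - P₀) B Bᵀ (σP - P₀)`, whose right-hand side is negative
semidefinite. Along `u t = exp (t A_cl) x` the quadratic form `u t ⬝ᵥ X u t` is therefore
nonincreasing, and it tends to `0` because `A_cl` is Hurwitz; hence `x ⬝ᵥ X x ≥ 0`. On a
generalized eigenspace of `A_cl` for `μ`, `exp (t A_cl) x` is `exp (t μ)` times a polynomial
in `t`, which gives the decay.
-/

open Matrix

open NormedSpace Filter Finset Topology

attribute [local instance] Matrix.linftyOpNormedRing Matrix.linftyOpNormedAlgebra

lemma tendsto_cexp_mul_mul_pow_atTop {μ : ℂ} (hμ : μ.re < 0) (k : ℕ) :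
    Tendsto (fun t : ℝ => Complex.exp (t * μ) * (t : ℂ) ^ k) atTop (𝓝 0) := by
  rw [tendsto_zero_iff_norm_tendsto_zero]
  refine (tendsto_rpow_mul_exp_neg_mul_atTop_nhds_zero k (-μ.re) (by linarith)).congr' ?_
  filter_upwards [eventually_ge_atTop 0] with t ht
  simp [Complex.norm_exp, abs_of_nonneg ht, mul_comm]

namespace Matrix

variable {ι : Type*} [Fintype ι] [DecidableEq ι]

theorem exp_smul_mulVec_eq_sum_of_pow_mulVec_eq_zero {M : Matrix ι ι ℂ} {μ : ℂ} {v : ι → ℂ}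
    {K : ℕ} (hv : (M - μ • 1) ^ K *ᵥ v = 0) (z : ℂ) :
    exp (z • M) *ᵥ v =
      ∑ k ∈ range K, (Complex.exp (z * μ) * (z ^ k / k.factorial)) • ((M - μ • 1) ^ k *ᵥ v) := by
  set N := M - μ • 1
  have hsplit : exp (z • M) = Complex.exp (z * μ) • exp (z • N) := by
    have hcomm : Commute (algebraMap ℂ (Matrix ι ι ℂ) (z * μ)) (z • N) := Algebra.commutes _ _
    rw [show z • M = algebraMap ℂ _ (z * μ) + z • N by
        rw [Algebra.algebraMap_eq_smul_one, smul_sub, smul_smul]; abel,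
      Matrix.exp_add_of_commute _ _ hcomm]
    erw [← algebraMap_exp_comm (𝕂 := ℂ)]
    rw [Algebra.algebraMap_eq_smul_one, smul_mul_assoc, one_mul, Complex.exp_eq_exp_ℂ]
  let applyV : Matrix ι ι ℂ →L[ℂ] (ι → ℂ) :=
    ((LinearMap.applyₗ v).comp (toLin' (R := ℂ)).toLinearMap).toContinuousLinearMap
  have hseries :
      HasSum (fun k : ℕ => (z ^ k / k.factorial) • (N ^ k *ᵥ v)) (exp (z • N) *ᵥ v) := by
    convert applyV.hasSum (exp_series_hasSum_exp' (𝕂 := ℂ) (z • N)) using 1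
    · ext1 k
      change _ = ((k.factorial : ℂ)⁻¹ • (z • N) ^ k) *ᵥ v
      rw [smul_pow, smul_smul, smul_mulVec, div_eq_inv_mul]
    · rfl
  have hvanish : ∀ k ∉ range K, (z ^ k / k.factorial) • (N ^ k *ᵥ v) = 0 := by
    intro k hk
    obtain ⟨j, rfl⟩ := Nat.exists_eq_add_of_le (not_lt.1 (mem_range.not.1 hk))
    rw [add_comm K j, pow_add N j K, ← mulVec_mulVec, hv, mulVec_zero, smul_zero]
  rw [hsplit, smul_mulVec, ((hasSum_sum_of_ne_finset_zero hvanish).unique hseries).symm,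
    smul_sum]
  simp only [smul_smul]

theorem tendsto_exp_smul_mulVec_of_pow_mulVec_eq_zero {M : Matrix ι ι ℂ} {μ : ℂ}
    (hμ : μ.re < 0) {v : ι → ℂ} {K : ℕ} (hv : (M - μ • 1) ^ K *ᵥ v = 0) :
    Tendsto (fun t : ℝ => exp ((t : ℂ) • M) *ᵥ v) atTop (𝓝 0) := by
  simp_rw [exp_smul_mulVec_eq_sum_of_pow_mulVec_eq_zero hv, ← mul_div_assoc, div_eq_mul_inv]
  rw [← sum_const_zero (s := range K)]
  exact tendsto_finsetSum _ fun k _ => by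
    simpa using ((tendsto_cexp_mul_mul_pow_atTop hμ k).mul_const (k.factorial : ℂ)⁻¹).smul_const
      ((M - μ • 1) ^ k *ᵥ v)

theorem tendsto_exp_smul_mulVec_of_forall_re_neg {M : Matrix ι ι ℂ}
    (hM : ∀ μ ∈ spectrum ℂ M, μ.re < 0) (v : ι → ℂ) :
    Tendsto (fun t : ℝ => exp ((t : ℂ) • M) *ᵥ v) atTop (𝓝 0) := by
  have hv : v ∈ ⨆ μ, Module.End.maxGenEigenspace (toLin' M) μ := by
    rw [Module.End.iSup_maxGenEigenspace_eq_top]; trivial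
  refine Submodule.iSup_induction _
    (motive := fun w => Tendsto (fun t : ℝ => exp ((t : ℂ) • M) *ᵥ w) atTop (𝓝 0)) hv
    (fun μ w hw => ?_) (by simp) fun w₁ w₂ h₁ h₂ => by simpa [mulVec_add] using h₁.add h₂
  obtain rfl | hw0 := eq_or_ne w 0
  · simp
  have hμ : μ ∈ spectrum ℂ M := by
    rw [← spectrum_toLin']
    exact ((Module.End.hasUnifEigenvalue_iff_hasUnifEigenvalue_one (by simp)).1
      ((Submodule.ne_bot_iff _).2 ⟨w, hw, hw0⟩)).mem_spectrum
  obtain ⟨K, hK⟩ := (Module.End.mem_maxGenEigenspace _ _ _).1 hw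
  rw [Module.End.one_eq_id, ← toLin'_one, ← map_smul, ← map_sub, ← toLin'_pow,
    toLin'_apply] at hK
  exact tendsto_exp_smul_mulVec_of_pow_mulVec_eq_zero (hM μ hμ) hK

end Matrix

theorem IsHurwitz.tendsto_exp_smul_mulVec {n : ℕ} {M : Matrix (Fin n) (Fin n) ℝ}
    (hM : IsHurwitz M) (x : Fin n → ℝ) :
    Tendsto (fun t : ℝ => exp (t • M) *ᵥ x) atTop (𝓝 0) := by
  have hmap (t : ℝ) :
      exp ((t : ℂ) • M.map Complex.ofReal) = (exp (t • M)).map Complex.ofReal := by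
    rw [show (t : ℂ) • M.map Complex.ofReal = (t • M).map Complex.ofReal by ext; simp]
    have hcont : Continuous fun A : Matrix (Fin n) (Fin n) ℝ => A.map Complex.ofReal :=
      continuous_id.matrix_map Complex.continuous_ofReal
    exact (map_exp (algebraMap ℝ ℂ).mapMatrix hcont (t • M)).symm
  have hre : Continuous fun v : Fin n → ℂ => fun i => (v i).re := by fun_prop
  have := (hre.tendsto 0).comp (tendsto_exp_smul_mulVec_of_forall_re_neg hM (Complex.ofReal ∘ x))
  rw [show (0 : Fin n → ℝ) = fun i => ((0 : Fin n → ℂ) i).re by ext; simp]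
  refine this.congr fun t => ?_
  ext i
  rw [Function.comp_apply, hmap, ← Complex.ofReal_re ((exp (t • M) *ᵥ x) i)]
  exact congrArg Complex.re (Complex.ofRealHom.map_mulVec _ x i).symm

theorem HasDerivAt.dotProduct {ι : Type*} [Fintype ι] {u v : ℝ → ι → ℝ} {u' v' : ι → ℝ}
    {t : ℝ} (hu : HasDerivAt u u' t) (hv : HasDerivAt v v' t) :
    HasDerivAt (fun s => u s ⬝ᵥ v s) (u' ⬝ᵥ v t + u t ⬝ᵥ v') t := by
  have := HasDerivAt.fun_sum (u := Finset.univ) fun i _ =>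
    (hasDerivAt_pi.1 hu i).mul (hasDerivAt_pi.1 hv i)
  rwa [Finset.sum_add_distrib] at this

theorem HasDerivAt.const_mulVec {ι κ : Type*} [Fintype ι] [DecidableEq ι] [Fintype κ]
    (X : Matrix κ ι ℝ) {u : ℝ → ι → ℝ} {u' : ι → ℝ} {t : ℝ} (hu : HasDerivAt u u' t) :
    HasDerivAt (fun s => X *ᵥ u s) (X *ᵥ u') t :=
  (toLin' X).toContinuousLinearMap.hasFDerivAt.comp_hasDerivAt t hu

theorem HasDerivAt.mulVec_const {ι : Type*} [Fintype ι] [DecidableEq ι]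
    {E : ℝ → Matrix ι ι ℝ} {E' : Matrix ι ι ℝ} {t : ℝ} (hE : HasDerivAt E E' t) (x : ι → ℝ) :
    HasDerivAt (fun s => E s *ᵥ x) (E' *ᵥ x) t :=
  (((LinearMap.applyₗ x).comp (toLin' (R := ℝ)).toLinearMap).toContinuousLinearMap
    |>.hasFDerivAt.comp_hasDerivAt t hE :)

theorem hasDerivAt_exp_smul_mulVec {ι : Type*} [Fintype ι] [DecidableEq ι] (M : Matrix ι ι ℝ)
    (x : ι → ℝ) (t : ℝ) :
    HasDerivAt (fun s : ℝ => exp (s • M) *ᵥ x) (M *ᵥ (exp (t • M) *ᵥ x)) t := by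
  rw [mulVec_mulVec]
  exact (hasDerivAt_exp_smul_const' (𝕂 := ℝ) M t).mulVec_const x

theorem dotProduct_mulVec_add_dotProduct_mulVec {ι : Type*} [Fintype ι] (M X : Matrix ι ι ℝ)
    (y : ι → ℝ) :
    (M *ᵥ y) ⬝ᵥ (X *ᵥ y) + y ⬝ᵥ (X *ᵥ (M *ᵥ y)) = y ⬝ᵥ ((Mᵀ * X + X * M) *ᵥ y) := by
  rw [add_mulVec, dotProduct_add, ← mulVec_mulVec, ← mulVec_mulVec, mulVec_transpose,
    dotProduct_comm (M *ᵥ y), dotProduct_mulVec, dotProduct_comm y ((X *ᵥ y) ᵥ* M)]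

theorem IsHurwitz.posSemidef_of_lyapunov_s4 {n : ℕ} {M X R : Matrix (Fin n) (Fin n) ℝ}
    (hM : IsHurwitz M) (hX : X.IsSymm) (hR : R.PosSemidef) (hL : Mᵀ * X + X * M = -R) :
    X.PosSemidef := by
  refine .of_dotProduct_mulVec_nonneg (isHermitian_iff_isSymm.2 hX) fun x => ?_
  set u : ℝ → Fin n → ℝ := fun t => exp (t • M) *ᵥ x
  set f : ℝ → ℝ := fun t => u t ⬝ᵥ (X *ᵥ u t)
  have hf (t : ℝ) : HasDerivAt f (-(u t ⬝ᵥ (R *ᵥ u t))) t := by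
    have hu := hasDerivAt_exp_smul_mulVec M x t
    convert hu.dotProduct (hu.const_mulVec X) using 1
    rw [dotProduct_mulVec_add_dotProduct_mulVec, hL, neg_mulVec, dotProduct_neg]
  have hanti : Antitone f := antitone_of_hasDerivAt_nonpos hf fun t => by
    simpa using hR.dotProduct_mulVec_nonneg (u t)
  have hlim : Tendsto f atTop (𝓝 0) := by
    have hcont : Continuous fun y : Fin n → ℝ => y ⬝ᵥ (X *ᵥ y) := by fun_prop
    have := (hcont.tendsto 0).comp (hM.tendsto_exp_smul_mulVec x)
    rwa [mulVec_zero, dotProduct_zero] at this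
  simpa [f, u] using hanti.le_of_tendsto hlim 0

theorem lyapunov_sub_of_riccati {ι α : Type*} [Fintype ι] [CommRing α]
    {A G K P₀ H : Matrix ι ι α} (hG : G.IsSymm) (hP₀ : P₀.IsSymm)
    (hRic : Aᵀ * P₀ + P₀ * A - P₀ * G * P₀ = 0)
    (hLyap : (A - G * K)ᵀ * H + H * (A - G * K) = -(Kᵀ * G * K)) :
    (A - G * K)ᵀ * (H - P₀) + (H - P₀) * (A - G * K) = -((K - P₀)ᵀ * G * (K - P₀)) := by
  have hAcl : (A - G * K)ᵀ = Aᵀ - Kᵀ * G := by rw [transpose_sub, transpose_mul, hG.eq]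
  rw [hAcl] at hLyap ⊢
  calc _ = ((Aᵀ - Kᵀ * G) * H + H * (A - G * K)) - (Aᵀ * P₀ + P₀ * A - P₀ * G * P₀)
        - (P₀ * G * P₀ - Kᵀ * G * P₀ - P₀ * G * K) := by noncomm_ring
    _ = _ := by rw [hLyap, hRic, transpose_sub, hP₀.eq]; noncomm_ring

theorem energy_lower_bound_general
    {n m : ℕ} (A : Matrix (Fin n) (Fin n) ℝ) (B : Matrix (Fin n) (Fin m) ℝ)
    (P P₀ H : Matrix (Fin n) (Fin n) ℝ)
    (hP : P.PosSemidef) (hP₀ : P₀.PosSemidef)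
    (hARE₀ : Aᵀ * P₀ + P₀ * A - P₀ * B * Bᵀ * P₀ = 0)
    (σ : ℝ)
    (hHur : IsHurwitz (A - σ • (B * Bᵀ * P)))
    (hH : H.IsSymm)
    (hLyap : (A - σ • (B * Bᵀ * P))ᵀ * H + H * (A - σ • (B * Bᵀ * P)) =
      -(σ ^ 2 • (P * B * Bᵀ * P))) :
    (H - P₀).PosSemidef := by
  set K := σ • P
  have hK : K.IsSymm := (isHermitian_iff_isSymm.1 hP.1).smul σ
  have hP₀s : P₀.IsSymm := isHermitian_iff_isSymm.1 hP₀.1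
  have hG : (B * Bᵀ).IsSymm := by rw [IsSymm, transpose_mul, transpose_transpose]
  have hAcl : A - σ • (B * Bᵀ * P) = A - B * Bᵀ * K := by rw [Matrix.mul_smul]
  have hgain : σ ^ 2 • (P * B * Bᵀ * P) = Kᵀ * (B * Bᵀ) * K := by
    simp only [hK.eq, K, Matrix.smul_mul, Matrix.mul_smul, smul_smul, sq, Matrix.mul_assoc]
  rw [hAcl] at hHur
  rw [hAcl, hgain] at hLyap
  rw [Matrix.mul_assoc P₀ B] at hARE₀
  have hR : ((K - P₀)ᵀ * (B * Bᵀ) * (K - P₀)).PosSemidef := by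
    simpa [Matrix.mul_assoc] using posSemidef_conjTranspose_mul_self (Bᵀ * (K - P₀))
  exact hHur.posSemidef_of_lyapunov_s4 (hH.sub hP₀s) hR
    (lyapunov_sub_of_riccati hG hP₀s hARE₀ hLyap)

theorem energy_lower_bound
    {n m : ℕ} (A : Matrix (Fin n) (Fin n) ℝ) (B : Matrix (Fin n) (Fin m) ℝ)
    (P P₀ Q H : Matrix (Fin n) (Fin n) ℝ)
    (hP : P.PosSemidef) (hP₀ : P₀.PosSemidef) (hQ : Q.PosSemidef)
    (hARE₀ : Aᵀ * P₀ + P₀ * A - P₀ * B * Bᵀ * P₀ = 0)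
    (hARE : Aᵀ * P + P * A - P * B * Bᵀ * P = -Q)
    (σ : ℝ) (hσ : 1 ≤ σ)
    (hHur : IsHurwitz (A - σ • (B * Bᵀ * P)))
    (hH : H.IsSymm)
    (hLyap : (A - σ • (B * Bᵀ * P))ᵀ * H + H * (A - σ • (B * Bᵀ * P)) =
      -(σ ^ 2 • (P * B * Bᵀ * P))) :
    (H - P₀).PosSemidef :=
  energy_lower_bound_general A B P P₀ H hP hP₀ hARE₀ σ hHur hH hLyap
end

section
/- Under the hypotheses of the previous statement, if moreover for the complete graph each individual quadratic form v^T E_k v ≥ 0 with v chosen appropriately per edge (taking v = e_i − e_j to isolate edge k), then y_k = y_k' for every edge k; i.e., the optimal weight realization with optimal value 1 is unique. -/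
/-!
Put `D = ∑ₖ (yₖ - y'ₖ) Eₖ` and `J = 𝟏𝟏ᵀ`. In the Loewner order the hypotheses give
`D ≤ y₀' J` and `-D ≤ y₀ J`. Every `Eₖ` annihilates `𝟏`, hence so does the symmetric matrix `D`,
and the quadratic form of `D` is unchanged by shifting its argument along `𝟏`. Shifting any vector
into `𝟏^⊥`, where `J` vanishes, shows `D ≤ 0` and `-D ≤ 0`, so `D = 0`; the `(i, j)` entry of `D`
for an edge `k = (i, j)` is `-(yₖ - y'ₖ)`.
-/

open Matrix

open scoped MatrixOrder

namespace Matrix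

section Ring

variable {n α : Type*} [Ring α]

lemma vecMulVec_mulVec_one_of_sum_eq_zero [Fintype n] (u : n → α) {v : n → α}
    (hv : ∑ i, v i = 0) : vecMulVec u v *ᵥ 1 = 0 := by
  rw [vecMulVec_mulVec, dotProduct_one, hv, MulOpposite.op_zero, zero_smul]

lemma sum_single_sub_single [Fintype n] [DecidableEq n] (a b : n) :
    ∑ i, (Pi.single a 1 - Pi.single b 1 : n → α) i = 0 := by
  simp [Finset.sum_sub_distrib]

lemma vecMulVec_single_sub_single_apply_of_lt [LinearOrder n] {a b i j : n} (hab : a < b)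
    (hij : i < j) :
    vecMulVec (Pi.single a 1 - Pi.single b 1 : n → α) (Pi.single a 1 - Pi.single b 1) i j =
      if a = i ∧ b = j then -1 else 0 := by
  simp only [vecMulVec_apply, Pi.sub_apply, Pi.single_apply]
  split_ifs <;> grind

lemma sum_smul_vecMulVec_single_sub_single_apply [Fintype n] [LinearOrder n]
    (c : {p : n × n // p.1 < p.2} → α) (k : {p : n × n // p.1 < p.2}) :
    (∑ m, c m • vecMulVec (Pi.single m.1.1 1 - Pi.single m.1.2 1 : n → α)
      (Pi.single m.1.1 1 - Pi.single m.1.2 1)) k.1.1 k.1.2 = -c k := by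
  rw [sum_apply]
  calc _ = ∑ m, if m = k then -c m else 0 := by
        refine Finset.sum_congr rfl fun m _ => ?_
        rw [smul_apply, vecMulVec_single_sub_single_apply_of_lt m.2 k.2]
        simp [Subtype.ext_iff, Prod.ext_iff]
    _ = -c k := by simp

end Ring

variable {n : Type*} [Fintype n]

lemma IsHermitian.one_vecMul_eq_zero {A : Matrix n n ℝ} (hA : A.IsHermitian)
    (hA1 : A *ᵥ 1 = 0) : 1 ᵥ* A = 0 := by
  rw [← hA1, ← vecMul_transpose, ← conjTranspose_eq_transpose_of_trivial, hA.eq]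

lemma IsHermitian.dotProduct_mulVec_add_smul_one {A : Matrix n n ℝ} (hA : A.IsHermitian)
    (hA1 : A *ᵥ 1 = 0) (v : n → ℝ) (t : ℝ) :
    (v + t • 1) ⬝ᵥ A *ᵥ (v + t • 1) = v ⬝ᵥ A *ᵥ v := by
  rw [mulVec_add, mulVec_smul, hA1, smul_zero, add_zero, add_dotProduct, smul_dotProduct,
    dotProduct_mulVec 1, hA.one_vecMul_eq_zero hA1, zero_dotProduct, smul_zero, add_zero]

lemma exists_sum_add_smul_one_eq_zero (v : n → ℝ) : ∃ t : ℝ, ∑ i, (v + t • 1) i = 0 := by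
  rcases isEmpty_or_nonempty n with hn | hn
  · exact ⟨0, by simp⟩
  · refine ⟨-(∑ i, v i) / Fintype.card n, ?_⟩
    simp only [Pi.add_apply, Pi.smul_apply, Pi.one_apply, smul_eq_mul, mul_one,
      Finset.sum_add_distrib, Finset.sum_const, Finset.card_univ, nsmul_eq_mul]
    field_simp
    ring

lemma of_const_one_mulVec (w : n → ℝ) :
    (of fun _ _ => (1 : ℝ) : Matrix n n ℝ) *ᵥ w = fun _ => ∑ i, w i := by
  ext; simp [mulVec, dotProduct]

lemma nonpos_of_mulVec_one_eq_zero_of_le_smul_of_const_one {A : Matrix n n ℝ} {c : ℝ}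
    (hA1 : A *ᵥ 1 = 0) (h : A ≤ c • of fun _ _ => 1) : A ≤ 0 := by
  have hJ : (of fun _ _ => (1 : ℝ) : Matrix n n ℝ).IsHermitian := by
    ext; simp
  have hA : A.IsHermitian := by
    simpa using (hJ.smul (IsSelfAdjoint.all c)).sub (le_iff.mp h).isHermitian
  rw [le_iff, zero_sub]
  refine .of_dotProduct_mulVec_nonneg hA.neg fun v => ?_
  obtain ⟨t, ht⟩ := exists_sum_add_smul_one_eq_zero v
  have := (le_iff.mp h).dotProduct_mulVec_nonneg (v + t • 1)
  rw [sub_mulVec, smul_mulVec, of_const_one_mulVec, ht, star_trivial, dotProduct_sub,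
    hA.dotProduct_mulVec_add_smul_one hA1] at this
  simpa [neg_mulVec] using this

end Matrix

theorem complete_graph_optimal_weights_unique
    {N : ℕ}
    (E : {p : Fin N × Fin N // p.1 < p.2} → Matrix (Fin N) (Fin N) ℝ)
    (hE : ∀ k, E k = vecMulVec (Pi.single k.1.1 1 - Pi.single k.1.2 1)
      (Pi.single k.1.1 1 - Pi.single k.1.2 1))
    (y y' : {p : Fin N × Fin N // p.1 < p.2} → ℝ) (y₀ y₀' : ℝ)
    (h1 : ((∑ k, y k • E k) -
      ((1 : Matrix (Fin N) (Fin N) ℝ) - y₀ • Matrix.of (fun _ _ => (1 : ℝ)))).PosSemidef)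
    (h2 : ((1 : Matrix (Fin N) (Fin N) ℝ) - ∑ k, y k • E k).PosSemidef)
    (h1' : ((∑ k, y' k • E k) -
      ((1 : Matrix (Fin N) (Fin N) ℝ) - y₀' • Matrix.of (fun _ _ => (1 : ℝ)))).PosSemidef)
    (h2' : ((1 : Matrix (Fin N) (Fin N) ℝ) - ∑ k, y' k • E k).PosSemidef) :
    ∀ k, y k = y' k := by
  set D := ∑ m, (y m - y' m) • E m
  have hD1 : D *ᵥ 1 = 0 := by
    simp only [D, sum_mulVec, smul_mulVec, hE,
      vecMulVec_mulVec_one_of_sum_eq_zero _ (sum_single_sub_single _ _), smul_zero,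
      Finset.sum_const_zero]
  have hdiff : (∑ m, y m • E m) - ∑ m, y' m • E m = D := by
    simp only [D, sub_smul, Finset.sum_sub_distrib]
  have hup : D ≤ y₀' • of fun _ _ => 1 := by
    simpa [hdiff] using sub_le_sub (le_iff.mpr h2) (le_iff.mpr h1')
  have hlo : -D ≤ y₀ • of fun _ _ => 1 := by
    simpa [← hdiff] using sub_le_sub (le_iff.mpr h2') (le_iff.mpr h1)
  have hD : D = 0 := by
    refine le_antisymm (nonpos_of_mulVec_one_eq_zero_of_le_smul_of_const_one hD1 hup) ?_
    exact neg_nonpos.mp <|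
      nonpos_of_mulVec_one_eq_zero_of_le_smul_of_const_one (by simp [neg_mulVec, hD1]) hlo
  intro k
  have hentry : D k.1.1 k.1.2 = -(y k - y' k) := by
    simpa only [D, hE] using sum_smul_vecMulVec_single_sub_single_apply (fun m => y m - y' m) k
  rw [hD, Matrix.zero_apply] at hentry
  linarith
end
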